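/- arXiv:2208.00552 — 6 statements merged into one kernel-verified Lean document; each statement's English description precedes it below -/
import Mathlib

section
/- Under the setup of the previous statement (exogenous controls Cov(W₁, W₂) = 0, Var(W₂) = 1, positive definiteness), let π₂ = Cov(W₂, X) (the W₂-coefficient in the projection of X on (W₁, W₂), which coincides with the simple projection coefficient under exogeneity), let X^{⊥W₁} = X − π₁'W₁, and let B = β_med − β_long. Then π₂ · γ₂ = B · Var(X^{⊥W₁}). -/
open scoped RealInnerProductSpace

/-- Gram (covariance) matrix of a finite family of demeaned square-integrable
random variables, modeled as vectors in a real inner product space where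
`⟪A, B⟫` is `Cov(A, B)`. -/
noncomputable def gram {V : Type*} [NormedAddCommGroup V] [InnerProductSpace ℝ V]
    {ι : Type*} [Fintype ι] (f : ι → V) : Matrix ι ι ℝ :=
  Matrix.of fun i j => ⟪f i, f j⟫

/-- `π₁ = Var(W₁)⁻¹ Cov(W₁, X)`: coefficient vector of the linear projection of
`X` on `W₁`. -/
noncomputable def pi1 {V : Type*} [NormedAddCommGroup V] [InnerProductSpace ℝ V]
    {d : ℕ} (W₁ : Fin d → V) (X : V) : Fin d → ℝ :=
  (gram W₁)⁻¹.mulVec fun i => ⟪W₁ i, X⟫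

/-- `X^{⊥W₁} = X − π₁'W₁`. -/
noncomputable def perpW1 {V : Type*} [NormedAddCommGroup V] [InnerProductSpace ℝ V]
    {d : ℕ} (W₁ : Fin d → V) (X : V) : V :=
  X - ∑ i, pi1 W₁ X i • W₁ i

/-! The residual `X^{⊥W₁}` is orthogonal to `W₁` (this is where `Var(W₁)` must be invertible),
so pairing either decomposition of `Y` with it kills the `W₁`-terms and the residuals. The
long regression leaves `β_long Var(X^{⊥W₁}) + γ₂ Cov(W₂, X)`, because `W₂ ⊥ W₁` gives
`Cov(W₂, X^{⊥W₁}) = Cov(W₂, X)`; the medium one leaves `β_med Var(X^{⊥W₁})`. -/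

open scoped Matrix

section

variable {V : Type*} [NormedAddCommGroup V] [InnerProductSpace ℝ V]

theorem gram_comp {ι κ : Type*} [Fintype ι] [Fintype κ] (f : ι → V) (e : κ → ι) :
    gram (f ∘ e) = (gram f).submatrix e e :=
  rfl

theorem posDef_gram_comp {ι κ : Type*} [Fintype ι] [Fintype κ] {f : ι → V}
    (hf : (gram f).PosDef) {e : κ → ι} (he : Function.Injective e) : (gram (f ∘ e)).PosDef :=
  gram_comp f e ▸ hf.submatrix he

variable {d : ℕ} {W₁ : Fin d → V}

theorem gram_mulVec_pi1 (hW₁ : IsUnit (gram W₁).det) (X : V) :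
    gram W₁ *ᵥ pi1 W₁ X = fun i => ⟪W₁ i, X⟫ := by
  rw [pi1, Matrix.mulVec_mulVec, Matrix.mul_nonsing_inv _ hW₁, Matrix.one_mulVec]

theorem inner_perpW1_of_forall_inner_eq_zero {R : V} (hR : ∀ i, ⟪R, W₁ i⟫ = 0) (X : V) :
    ⟪R, perpW1 W₁ X⟫ = ⟪R, X⟫ := by
  simp [perpW1, inner_sub_right, inner_sum, real_inner_smul_right, hR]

theorem inner_left_perpW1 (hW₁ : IsUnit (gram W₁).det) (X : V) (i : Fin d) :
    ⟪W₁ i, perpW1 W₁ X⟫ = 0 := by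
  have hi := congrFun (gram_mulVec_pi1 hW₁ X) i
  simp only [Matrix.mulVec, dotProduct, gram, Matrix.of_apply] at hi
  simp only [perpW1, inner_sub_right, inner_sum, real_inner_smul_right, mul_comm (pi1 W₁ X _)]
  rw [hi, sub_self]

theorem inner_sum_smul_perpW1 (hW₁ : IsUnit (gram W₁).det) (c : Fin d → ℝ) (X : V) :
    ⟪∑ i, c i • W₁ i, perpW1 W₁ X⟫ = 0 := by
  simp [sum_inner, real_inner_smul_left, inner_left_perpW1 hW₁]

theorem inner_self_perpW1 (hW₁ : IsUnit (gram W₁).det) (X : V) :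
    ⟪X, perpW1 W₁ X⟫ = ⟪perpW1 W₁ X, perpW1 W₁ X⟫ := by
  rw [← sub_zero ⟪X, _⟫, ← inner_sum_smul_perpW1 hW₁ (pi1 W₁ X) X, ← inner_sub_left]
  rfl

theorem inner_perpW1_of_eq_add_sum_add (hW₁ : IsUnit (gram W₁).det) {X Y R : V} {b : ℝ}
    {c : Fin d → ℝ} (hY : Y = b • X + ∑ i, c i • W₁ i + R) (hR : ∀ i, ⟪R, W₁ i⟫ = 0) :
    ⟪Y, perpW1 W₁ X⟫ = b * ⟪perpW1 W₁ X, perpW1 W₁ X⟫ + ⟪R, X⟫ := by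
  rw [hY, inner_add_left, inner_add_left, real_inner_smul_left, inner_self_perpW1 hW₁,
    inner_sum_smul_perpW1 hW₁, inner_perpW1_of_forall_inner_eq_zero hR, add_zero]

end

theorem pi2_mul_gamma2_eq_bias_mul_varPerp_general
    {V : Type*} [NormedAddCommGroup V] [InnerProductSpace ℝ V] {d : ℕ}
    (Y X W₂ : V) (W₁ : Fin d → V)
    (hpdXW : (gram (Sum.elim (fun _ : Unit => X) (Sum.elim W₁ fun _ : Unit => W₂))).PosDef)
    (hexog : ∀ i, ⟪W₁ i, W₂⟫ = 0)
    (βlong βmed γ₂ : ℝ) (γ₁ γmed : Fin d → ℝ) (U Vres : V)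
    (hlong : Y = βlong • X + (∑ i, γ₁ i • W₁ i) + γ₂ • W₂ + U)
    (hUX : ⟪U, X⟫ = 0) (hUW1 : ∀ i, ⟪U, W₁ i⟫ = 0)
    (hmed : Y = βmed • X + (∑ i, γmed i • W₁ i) + Vres)
    (hVX : ⟪Vres, X⟫ = 0) (hVW1 : ∀ i, ⟪Vres, W₁ i⟫ = 0) :
    ⟪W₂, X⟫ * γ₂ = (βmed - βlong) * ⟪perpW1 W₁ X, perpW1 W₁ X⟫ := by
  have hW₁ : IsUnit (gram W₁).det :=
    (posDef_gram_comp hpdXW (Sum.inr_injective.comp Sum.inl_injective)).det_pos.ne'.isUnit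
  have hlong' : Y = βlong • X + ∑ i, γ₁ i • W₁ i + (γ₂ • W₂ + U) := by
    rw [hlong, add_assoc]
  have hresid : ∀ i, ⟪γ₂ • W₂ + U, W₁ i⟫ = 0 := fun i => by
    rw [inner_add_left, real_inner_smul_left, real_inner_comm, hexog, hUW1, mul_zero, add_zero]
  have hY_long := inner_perpW1_of_eq_add_sum_add hW₁ hlong' hresid
  have hY_med := inner_perpW1_of_eq_add_sum_add hW₁ hmed hVW1
  rw [inner_add_left, real_inner_smul_left, hUX] at hY_long
  rw [hVX] at hY_med
  linarith

/-- `π₂ · γ₂ = B · Var(X^{⊥W₁})` where `π₂ = Cov(W₂, X)` and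
`B = β_med − β_long`, under exogenous controls. -/
theorem pi2_mul_gamma2_eq_bias_mul_varPerp
    {V : Type*} [NormedAddCommGroup V] [InnerProductSpace ℝ V] {d : ℕ}
    (Y X W₂ : V) (W₁ : Fin d → V)
    (hpdXW : (gram (Sum.elim (fun _ : Unit => X) (Sum.elim W₁ fun _ : Unit => W₂))).PosDef)
    (hpdYX : (gram (Sum.elim (fun _ : Unit => Y) (Sum.elim (fun _ : Unit => X) W₁))).PosDef)
    (hexog : ∀ i, ⟪W₁ i, W₂⟫ = 0)
    (hnorm : ⟪W₂, W₂⟫ = 1)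
    (βlong βmed γ₂ : ℝ) (γ₁ γmed : Fin d → ℝ) (U Vres : V)
    (hlong : Y = βlong • X + (∑ i, γ₁ i • W₁ i) + γ₂ • W₂ + U)
    (hUX : ⟪U, X⟫ = 0) (hUW1 : ∀ i, ⟪U, W₁ i⟫ = 0) (hUW2 : ⟪U, W₂⟫ = 0)
    (hmed : Y = βmed • X + (∑ i, γmed i • W₁ i) + Vres)
    (hVX : ⟪Vres, X⟫ = 0) (hVW1 : ∀ i, ⟪Vres, W₁ i⟫ = 0) :
    ⟪W₂, X⟫ * γ₂ = (βmed - βlong) * ⟪perpW1 W₁ X, perpW1 W₁ X⟫ :=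
  pi2_mul_gamma2_eq_bias_mul_varPerp_general Y X W₂ W₁ hpdXW hexog βlong βmed γ₂ γ₁ γmed U Vres
    hlong hUX hUW1 hmed hVX hVW1
end

section
/- In the setting of the previous statement, define R²_short = Var(β_short X)/Var(Y) and R²_med = Var(β_med X + γ_med'W₁)/Var(Y), with Var(Y) > 0. Then (R²_med − R²_short)·Var(Y) = Var(γ_med'W₁) − Var(X)·(β_short − β_med)². -/
/-!
Write `Y = β X + W + V` with `V ⟂ X`. The normal equation of the short regression,
`Var(X) β_short = Cov(Y, X) = β Var(X) + Cov(W, X)`, does it all: expanding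
`Var(β X + W) - Var(β_short X)` and eliminating `Cov(W, X)` with it leaves
`Var(W) - Var(X) (β_short - β)²`.
-/

open scoped RealInnerProductSpace

section

variable {V : Type*} [NormedAddCommGroup V] [InnerProductSpace ℝ V]

/-- The normal equation of the regression of `Y` on `X`; for `X = 0` both sides vanish,
since `⟪Y, X⟫ / 0 = 0`. -/
theorem inner_self_mul_div_inner_self (Y X : V) : ⟪X, X⟫ * (⟪Y, X⟫ / ⟪X, X⟫) = ⟪Y, X⟫ := by
  rcases eq_or_ne X 0 with rfl | hX
  · simp
  · exact mul_div_cancel₀ _ (inner_self_ne_zero.mpr hX)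

theorem inner_eq_of_eq_add_orthogonal {Y X W R : V} {β : ℝ} (hY : Y = β • X + W + R)
    (hRX : ⟪R, X⟫ = 0) : ⟪Y, X⟫ = β * ⟪X, X⟫ + ⟪W, X⟫ := by
  rw [hY, inner_add_left, inner_add_left, real_inner_smul_left, hRX, add_zero]

theorem inner_self_smul_add_sub_inner_self_smul {X W : V} {β βshort : ℝ}
    (hnormal : ⟪X, X⟫ * βshort = β * ⟪X, X⟫ + ⟪W, X⟫) :
    ⟪β • X + W, β • X + W⟫ - ⟪βshort • X, βshort • X⟫
      = ⟪W, W⟫ - ⟪X, X⟫ * (βshort - β) ^ 2 := by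
  simp only [inner_add_left, inner_add_right, real_inner_smul_left, real_inner_smul_right,
    real_inner_comm W X]
  linear_combination (-2 * β) * hnormal

end

theorem r2_med_sub_r2_short_general
    {V : Type*} [NormedAddCommGroup V] [InnerProductSpace ℝ V] {d : ℕ}
    (Y X : V) (W₁ : Fin d → V)
    (hvarY : 0 < ⟪Y, Y⟫)
    (βmed : ℝ) (γmed : Fin d → ℝ) (Vres : V)
    (hmed : Y = βmed • X + (∑ i, γmed i • W₁ i) + Vres)
    (hVX : ⟪Vres, X⟫ = 0) :
    (⟪βmed • X + ∑ i, γmed i • W₁ i, βmed • X + ∑ i, γmed i • W₁ i⟫ / ⟪Y, Y⟫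
        - ⟪(⟪Y, X⟫ / ⟪X, X⟫) • X, (⟪Y, X⟫ / ⟪X, X⟫) • X⟫ / ⟪Y, Y⟫) * ⟪Y, Y⟫
      = ⟪∑ i, γmed i • W₁ i, ∑ i, γmed i • W₁ i⟫
        - ⟪X, X⟫ * (⟪Y, X⟫ / ⟪X, X⟫ - βmed) ^ 2 := by
  rw [← sub_div, div_mul_cancel₀ _ hvarY.ne']
  apply inner_self_smul_add_sub_inner_self_smul
  rw [inner_self_mul_div_inner_self, inner_eq_of_eq_add_orthogonal hmed hVX]

/-- `(R²_med − R²_short)·Var(Y) = Var(γ_med'W₁) − Var(X)·(β_short − β_med)²`,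
where `R²_short = Var(β_short X)/Var(Y)` and
`R²_med = Var(β_med X + γ_med'W₁)/Var(Y)`. -/
theorem r2_med_sub_r2_short
    {V : Type*} [NormedAddCommGroup V] [InnerProductSpace ℝ V] {d : ℕ}
    (Y X : V) (W₁ : Fin d → V)
    (hpdXW : (gram (Sum.elim (fun _ : Unit => X) W₁)).PosDef)
    (hvarX : 0 < ⟪X, X⟫) (hvarY : 0 < ⟪Y, Y⟫)
    (βmed : ℝ) (γmed : Fin d → ℝ) (Vres : V)
    (hmed : Y = βmed • X + (∑ i, γmed i • W₁ i) + Vres)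
    (hVX : ⟪Vres, X⟫ = 0) (hVW1 : ∀ i, ⟪Vres, W₁ i⟫ = 0) :
    (⟪βmed • X + ∑ i, γmed i • W₁ i, βmed • X + ∑ i, γmed i • W₁ i⟫ / ⟪Y, Y⟫
        - ⟪(⟪Y, X⟫ / ⟪X, X⟫) • X, (⟪Y, X⟫ / ⟪X, X⟫) • X⟫ / ⟪Y, Y⟫) * ⟪Y, Y⟫
      = ⟪∑ i, γmed i • W₁ i, ∑ i, γmed i • W₁ i⟫
        - ⟪X, X⟫ * (⟪Y, X⟫ / ⟪X, X⟫ - βmed) ^ 2 :=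
  r2_med_sub_r2_short_general Y X W₁ hvarY βmed γmed Vres hmed hVX
end

section
/- Under the same setup (positive definiteness, Cov(W₁,W₂)=0, Var(W₂)=1, γ₁ ≠ 0, γ₂ ≠ 0, and δ satisfying the proportional-selection equation), let B = β_med − β_long. Define f₀(B) = −B·Var(X^{⊥W₁})·( Var(γ_med'W₁) + 2B·Cov(X, γ_med'W₁) + B²·Var(π₁'W₁) ) and f₁(B, R²_long) = (R²_long − R²_med)Var(Y)·Cov(X, γ_med'W₁) + B(R²_long − R²_med)Var(Y)·Var(π₁'W₁) + B²·Var(X^{⊥W₁})·Cov(X, γ_med'W₁) + B³·Var(X^{⊥W₁})·Var(π₁'W₁). Then f₀(B) + δ·f₁(B, R²_long) = 0. -/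
open scoped RealInnerProductSpace

/-- `f₀(B) = −B·Var(X^{⊥W₁})·(Var(γ_med'W₁) + 2B·Cov(X,γ_med'W₁) + B²·Var(π₁'W₁))`. -/
noncomputable def f0 (vXp vGam cXg vPi B : ℝ) : ℝ :=
  -B * vXp * (vGam + 2 * B * cXg + B ^ 2 * vPi)

/-- `f₁(B, R²_long)` as in Oster's cubic. -/
noncomputable def f1 (R2l R2m vY cXg vPi vXp B : ℝ) : ℝ :=
  (R2l - R2m) * vY * cXg + B * (R2l - R2m) * vY * vPi
    + B ^ 2 * vXp * cXg + B ^ 3 * vXp * vPi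

/-!
Let `K` be the span of `W₁` and `X = P + X^{⊥W₁}` with `P ∈ K`, `X^{⊥W₁} ∈ Kᗮ`. Equating the long
and medium projections of `Y`, the vector `γ₂W₂ + U − V − B·X^{⊥W₁}` lies both in `K` and in `Kᗮ`,
so it vanishes. This gives `γ₁'W₁ = γ_med'W₁ + B·P`, the omitted-variable-bias formula
`Cov(X, γ₂W₂) = B·Var(X^{⊥W₁})` and, by Pythagoras,
`(R²_long − R²_med)·Var(Y) = Var(γ₂W₂) − B²·Var(X^{⊥W₁})`. Substituting these into the
cross-multiplied proportional-selection equation yields the cubic.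
-/

open Submodule

section

variable {V : Type*} [NormedAddCommGroup V] [InnerProductSpace ℝ V]

theorem mem_orthogonal_span_range_iff {ι : Type*} {W : ι → V} {v : V} :
    v ∈ (span ℝ (Set.range W))ᗮ ↔ ∀ i, ⟪W i, v⟫ = 0 := by
  rw [← span_singleton_le_iff_mem, ← isOrtho_iff_le, isOrtho_comm, isOrtho_span]
  simp

theorem sum_smul_mem_span_range {ι : Type*} [Fintype ι] (W : ι → V) (c : ι → ℝ) :
    ∑ i, c i • W i ∈ span ℝ (Set.range W) :=
  sum_smul_mem _ c fun i _ => subset_span ⟨i, rfl⟩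

theorem gram_mulVec_pi1_s7 {d : ℕ} {W : Fin d → V} (hW : LinearIndependent ℝ W) (X : V) :
    (gram W).mulVec (pi1 W X) = fun i => ⟪W i, X⟫ := by
  have hdet : IsUnit (gram W).det :=
    isUnit_iff_ne_zero.2 (Matrix.det_gram_ne_zero_iff_linearIndependent.2 hW)
  rw [pi1, Matrix.mulVec_mulVec, Matrix.mul_nonsing_inv _ hdet, Matrix.one_mulVec]

theorem perpW1_mem_orthogonal {d : ℕ} {W : Fin d → V} (hW : LinearIndependent ℝ W) (X : V) :
    perpW1 W X ∈ (span ℝ (Set.range W))ᗮ := by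
  refine mem_orthogonal_span_range_iff.2 fun j => ?_
  have hj := congrFun (gram_mulVec_pi1_s7 hW X) j
  simp only [Matrix.mulVec, dotProduct, gram, Matrix.of_apply] at hj
  simp only [perpW1, inner_sub_right, inner_sum, real_inner_smul_right]
  rw [sub_eq_zero, ← hj]
  exact Finset.sum_congr rfl fun i _ => mul_comm _ _

variable {K : Submodule ℝ V}

theorem inner_eq_inner_of_sub_mem_orthogonal {X P k : V} (hXP : X - P ∈ Kᗮ) (hk : k ∈ K) :
    ⟪X, k⟫ = ⟪P, k⟫ := by
  rw [← sub_eq_zero, ← inner_sub_left, real_inner_comm]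
  exact inner_right_of_mem_orthogonal hk hXP

theorem sub_eq_smul_of_add_eq_add {X P s₁ sₘ z u v : V} {βₗ βₘ : ℝ}
    (hP : P ∈ K) (hXP : X - P ∈ Kᗮ) (hs₁ : s₁ ∈ K) (hsₘ : sₘ ∈ K) (hzuv : z + u - v ∈ Kᗮ)
    (h : βₗ • X + s₁ + z + u = βₘ • X + sₘ + v) :
    z + u - v = (βₘ - βₗ) • (X - P) := by
  have hK : z + u - v - (βₘ - βₗ) • (X - P) = sₘ - s₁ + (βₘ - βₗ) • P := by
    linear_combination (norm := module) h
  have hmem : z + u - v - (βₘ - βₗ) • (X - P) ∈ K ⊓ Kᗮ := by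
    refine ⟨?_, sub_mem hzuv (smul_mem _ _ hXP)⟩
    rw [hK]
    exact add_mem (sub_mem hsₘ hs₁) (smul_mem _ _ hP)
  rw [K.inf_orthogonal_eq_bot, mem_bot, sub_eq_zero] at hmem
  exact hmem

theorem eq_add_smul_of_add_eq_add {X P s₁ sₘ z u v : V} {βₗ βₘ : ℝ}
    (hP : P ∈ K) (hXP : X - P ∈ Kᗮ) (hs₁ : s₁ ∈ K) (hsₘ : sₘ ∈ K) (hzuv : z + u - v ∈ Kᗮ)
    (h : βₗ • X + s₁ + z + u = βₘ • X + sₘ + v) :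
    s₁ = sₘ + (βₘ - βₗ) • P := by
  have := sub_eq_smul_of_add_eq_add hP hXP hs₁ hsₘ hzuv h
  linear_combination (norm := module) h - this

/-- The omitted-variable-bias formula. -/
theorem inner_eq_mul_inner_self_of_sub_eq_smul {X P z u v : V} {B : ℝ}
    (hP : P ∈ K) (hXP : X - P ∈ Kᗮ) (huX : ⟪u, X⟫ = 0) (hvX : ⟪v, X⟫ = 0)
    (h : z + u - v = B • (X - P)) :
    ⟪X, z⟫ = B * ⟪X - P, X - P⟫ := by
  have hXp : ⟪X, X - P⟫ = ⟪X - P, X - P⟫ := by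
    rw [inner_sub_left X P, inner_right_of_mem_orthogonal hP hXP, sub_zero]
  have := congrArg (⟪X, ·⟫) h
  simp only [inner_sub_right X (z + u), inner_add_right, real_inner_smul_right, hXp,
    real_inner_comm u, real_inner_comm v, huX, hvX] at this
  linarith

theorem inner_self_sub_inner_self_eq_of_add_eq_add {L u M v : V} (h : L + u = M + v)
    (hLu : ⟪L, u⟫ = 0) (hMv : ⟪M, v⟫ = 0) :
    ⟪L, L⟫ - ⟪M, M⟫ = ⟪v, v⟫ - ⟪u, u⟫ := by
  have := congrArg (fun w => ⟪w, w⟫) h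
  simp only [real_inner_add_add_self, hLu, hMv] at this
  linarith

theorem inner_self_sub_inner_self_eq_of_eq_add_sub_smul {z u v x : V} {B : ℝ}
    (h : v = z + u - B • x) (hzu : ⟪z, u⟫ = 0) (hux : ⟪u, x⟫ = 0)
    (hzx : ⟪z, x⟫ = B * ⟪x, x⟫) :
    ⟪v, v⟫ - ⟪u, u⟫ = ⟪z, z⟫ - B ^ 2 * ⟪x, x⟫ := by
  subst h
  simp only [inner_sub_left, inner_sub_right, inner_add_left, inner_add_right,
    real_inner_smul_left, real_inner_smul_right]
  rw [real_inner_comm z u, real_inner_comm z x, real_inner_comm u x, hzu, hux, hzx]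
  ring

theorem mul_inner_mul_inner_self_eq_of_mul_div_eq {x s z : V} {δ : ℝ}
    (h : δ * (⟪x, s⟫ / ⟪s, s⟫) = ⟪x, z⟫ / ⟪z, z⟫) :
    δ * ⟪x, s⟫ * ⟪z, z⟫ = ⟪x, z⟫ * ⟪s, s⟫ := by
  rcases eq_or_ne s 0 with rfl | hs
  · simp
  rcases eq_or_ne z 0 with rfl | hz
  · simp
  rw [mul_div_assoc', div_eq_div_iff (inner_self_ne_zero.2 hs) (inner_self_ne_zero.2 hz)] at h
  exact h

theorem inner_self_sub_inner_self_eq_of_add_eq_add_of_mem_orthogonal {X P s₁ sₘ z u v : V}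
    {βₗ βₘ : ℝ} (hP : P ∈ K) (hXP : X - P ∈ Kᗮ) (hs₁ : s₁ ∈ K) (hsₘ : sₘ ∈ K)
    (hz : z ∈ Kᗮ) (hu : u ∈ Kᗮ) (hv : v ∈ Kᗮ) (huX : ⟪u, X⟫ = 0) (hvX : ⟪v, X⟫ = 0)
    (hzu : ⟪z, u⟫ = 0) (h : βₗ • X + s₁ + z + u = βₘ • X + sₘ + v) :
    ⟪βₗ • X + s₁ + z, βₗ • X + s₁ + z⟫ - ⟪βₘ • X + sₘ, βₘ • X + sₘ⟫
      = ⟪z, z⟫ - (βₘ - βₗ) ^ 2 * ⟪X - P, X - P⟫ := by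
  have hres := sub_eq_smul_of_add_eq_add hP hXP hs₁ hsₘ (sub_mem (add_mem hz hu) hv) h
  have hLu : ⟪βₗ • X + s₁ + z, u⟫ = 0 := by
    rw [inner_add_left, inner_add_left, real_inner_smul_left, real_inner_comm u X, huX,
      inner_right_of_mem_orthogonal hs₁ hu, hzu]
    ring
  have hMv : ⟪βₘ • X + sₘ, v⟫ = 0 := by
    rw [inner_add_left, real_inner_smul_left, real_inner_comm v X, hvX,
      inner_right_of_mem_orthogonal hsₘ hv]
    ring
  have huXP : ⟪u, X - P⟫ = 0 := by
    rw [inner_sub_right, huX, inner_left_of_mem_orthogonal hP hu, sub_zero]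
  have hzXP : ⟪z, X - P⟫ = (βₘ - βₗ) * ⟪X - P, X - P⟫ := by
    rw [inner_sub_right, inner_left_of_mem_orthogonal hP hz, sub_zero, real_inner_comm,
      inner_eq_mul_inner_self_of_sub_eq_smul hP hXP huX hvX hres]
  rw [inner_self_sub_inner_self_eq_of_add_eq_add h hLu hMv]
  exact inner_self_sub_inner_self_eq_of_eq_add_sub_smul (by rw [← hres]; abel) hzu huXP hzXP

theorem mul_inner_add_mul_inner_self_eq_of_proportional_selection {X P sₘ s₁ z : V} {B δ : ℝ}
    (hP : P ∈ K) (hsₘ : sₘ ∈ K) (hXP : X - P ∈ Kᗮ) (hs₁ : s₁ = sₘ + B • P)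
    (hz : ⟪X, z⟫ = B * ⟪X - P, X - P⟫) (hδ : δ * (⟪X, s₁⟫ / ⟪s₁, s₁⟫) = ⟪X, z⟫ / ⟪z, z⟫) :
    δ * (⟪X, sₘ⟫ + B * ⟪P, P⟫) * ⟪z, z⟫
      = B * ⟪X - P, X - P⟫ * (⟪sₘ, sₘ⟫ + 2 * B * ⟪X, sₘ⟫ + B ^ 2 * ⟪P, P⟫) := by
  have hXs₁ : ⟪X, s₁⟫ = ⟪X, sₘ⟫ + B * ⟪P, P⟫ := by
    rw [hs₁, inner_add_right, real_inner_smul_right, inner_eq_inner_of_sub_mem_orthogonal hXP hP]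
  have hs₁s₁ : ⟪s₁, s₁⟫ = ⟪sₘ, sₘ⟫ + 2 * B * ⟪X, sₘ⟫ + B ^ 2 * ⟪P, P⟫ := by
    rw [hs₁, real_inner_add_add_self, real_inner_smul_left, real_inner_smul_right,
      real_inner_smul_right, real_inner_comm P sₘ, ← inner_eq_inner_of_sub_mem_orthogonal hXP hsₘ]
    ring
  rw [← hXs₁, ← hs₁s₁, ← hz]
  exact mul_inner_mul_inner_self_eq_of_mul_div_eq hδ

end

theorem f0_add_mul_f1_eq_zero {vXp vGam cXg vPi B δ g r m vY : ℝ} (hvY : vY ≠ 0)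
    (hgap : r - m = g - B ^ 2 * vXp)
    (hsel : δ * (cXg + B * vPi) * g = B * vXp * (vGam + 2 * B * cXg + B ^ 2 * vPi)) :
    f0 vXp vGam cXg vPi B + δ * f1 (r / vY) (m / vY) vY cXg vPi vXp B = 0 := by
  simp only [f0, f1]
  field_simp
  linear_combination δ * (cXg + B * vPi) * hgap + hsel

theorem bias_is_root_of_oster_cubic_general
    {V : Type*} [NormedAddCommGroup V] [InnerProductSpace ℝ V] {d : ℕ}
    (Y X W₂ : V) (W₁ : Fin d → V)
    (hpdYX : (gram (Sum.elim (fun _ : Unit => Y) (Sum.elim (fun _ : Unit => X) W₁))).PosDef)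
    (hexog : ∀ i, ⟪W₁ i, W₂⟫ = 0)
    (βlong βmed γ₂ δ : ℝ) (γ₁ γmed : Fin d → ℝ) (U Vres : V)
    (hlong : Y = βlong • X + (∑ i, γ₁ i • W₁ i) + γ₂ • W₂ + U)
    (hUX : ⟪U, X⟫ = 0) (hUW1 : ∀ i, ⟪U, W₁ i⟫ = 0) (hUW2 : ⟪U, W₂⟫ = 0)
    (hmed : Y = βmed • X + (∑ i, γmed i • W₁ i) + Vres)
    (hVX : ⟪Vres, X⟫ = 0) (hVW1 : ∀ i, ⟪Vres, W₁ i⟫ = 0)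
    (hδ : δ * (⟪X, ∑ i, γ₁ i • W₁ i⟫ / ⟪∑ i, γ₁ i • W₁ i, ∑ i, γ₁ i • W₁ i⟫)
        = ⟪X, γ₂ • W₂⟫ / ⟪γ₂ • W₂, γ₂ • W₂⟫) :
    f0 ⟪perpW1 W₁ X, perpW1 W₁ X⟫
        ⟪∑ i, γmed i • W₁ i, ∑ i, γmed i • W₁ i⟫
        ⟪X, ∑ i, γmed i • W₁ i⟫
        ⟪∑ i, pi1 W₁ X i • W₁ i, ∑ i, pi1 W₁ X i • W₁ i⟫
        (βmed - βlong)
      + δ * f1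
        (⟪βlong • X + (∑ i, γ₁ i • W₁ i) + γ₂ • W₂,
            βlong • X + (∑ i, γ₁ i • W₁ i) + γ₂ • W₂⟫ / ⟪Y, Y⟫)
        (⟪βmed • X + ∑ i, γmed i • W₁ i, βmed • X + ∑ i, γmed i • W₁ i⟫ / ⟪Y, Y⟫)
        ⟪Y, Y⟫
        ⟪X, ∑ i, γmed i • W₁ i⟫
        ⟪∑ i, pi1 W₁ X i • W₁ i, ∑ i, pi1 W₁ X i • W₁ i⟫
        ⟪perpW1 W₁ X, perpW1 W₁ X⟫
        (βmed - βlong)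
      = 0 := by
  set K := span ℝ (Set.range W₁)
  have hW₁ : LinearIndependent ℝ W₁ := (Matrix.linearIndependent_of_posDef_gram hpdYX).comp _
    (Sum.inr_injective.comp Sum.inr_injective)
  have hK := sum_smul_mem_span_range W₁
  have hXp : perpW1 W₁ X ∈ Kᗮ := perpW1_mem_orthogonal hW₁ X
  have hZ : γ₂ • W₂ ∈ Kᗮ := smul_mem _ _ (mem_orthogonal_span_range_iff.2 hexog)
  have hU : U ∈ Kᗮ := mem_orthogonal_span_range_iff.2 fun i => real_inner_comm U _ ▸ hUW1 i
  have hV : Vres ∈ Kᗮ := mem_orthogonal_span_range_iff.2 fun i => real_inner_comm Vres _ ▸ hVW1 i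
  have hY := hlong.symm.trans hmed
  have hzuv := sub_mem (add_mem hZ hU) hV
  have hres := sub_eq_smul_of_add_eq_add (hK _) hXp (hK _) (hK _) hzuv hY
  have hZU : ⟪γ₂ • W₂, U⟫ = 0 := by rw [real_inner_smul_left, real_inner_comm, hUW2, mul_zero]
  have hgap := inner_self_sub_inner_self_eq_of_add_eq_add_of_mem_orthogonal (hK _) hXp (hK _)
    (hK _) hZ hU hV hUX hVX hZU hY
  have hsel := mul_inner_add_mul_inner_self_eq_of_proportional_selection (hK _) (hK _) hXp
    (eq_add_smul_of_add_eq_add (hK _) hXp (hK _) (hK _) hzuv hY)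
    (inner_eq_mul_inner_self_of_sub_eq_smul (hK _) hXp hUX hVX hres) hδ
  exact f0_add_mul_f1_eq_zero (hpdYX.diag_pos (i := Sum.inl ())).ne' hgap hsel

/-- The true bias `B = β_med − β_long` is a root of Oster's cubic:
`f₀(B) + δ·f₁(B, R²_long) = 0`. -/
theorem bias_is_root_of_oster_cubic
    {V : Type*} [NormedAddCommGroup V] [InnerProductSpace ℝ V] {d : ℕ}
    (Y X W₂ : V) (W₁ : Fin d → V)
    (hpdXW : (gram (Sum.elim (fun _ : Unit => X) (Sum.elim W₁ fun _ : Unit => W₂))).PosDef)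
    (hpdYX : (gram (Sum.elim (fun _ : Unit => Y) (Sum.elim (fun _ : Unit => X) W₁))).PosDef)
    (hexog : ∀ i, ⟪W₁ i, W₂⟫ = 0)
    (hnorm : ⟪W₂, W₂⟫ = 1)
    (βlong βmed γ₂ δ : ℝ) (γ₁ γmed : Fin d → ℝ) (U Vres : V)
    (hγ₁ : γ₁ ≠ 0) (hγ₂ : γ₂ ≠ 0)
    (hlong : Y = βlong • X + (∑ i, γ₁ i • W₁ i) + γ₂ • W₂ + U)
    (hUX : ⟪U, X⟫ = 0) (hUW1 : ∀ i, ⟪U, W₁ i⟫ = 0) (hUW2 : ⟪U, W₂⟫ = 0)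
    (hmed : Y = βmed • X + (∑ i, γmed i • W₁ i) + Vres)
    (hVX : ⟪Vres, X⟫ = 0) (hVW1 : ∀ i, ⟪Vres, W₁ i⟫ = 0)
    (hδ : δ * (⟪X, ∑ i, γ₁ i • W₁ i⟫ / ⟪∑ i, γ₁ i • W₁ i, ∑ i, γ₁ i • W₁ i⟫)
        = ⟪X, γ₂ • W₂⟫ / ⟪γ₂ • W₂, γ₂ • W₂⟫) :
    f0 ⟪perpW1 W₁ X, perpW1 W₁ X⟫
        ⟪∑ i, γmed i • W₁ i, ∑ i, γmed i • W₁ i⟫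
        ⟪X, ∑ i, γmed i • W₁ i⟫
        ⟪∑ i, pi1 W₁ X i • W₁ i, ∑ i, pi1 W₁ X i • W₁ i⟫
        (βmed - βlong)
      + δ * f1
        (⟪βlong • X + (∑ i, γ₁ i • W₁ i) + γ₂ • W₂,
            βlong • X + (∑ i, γ₁ i • W₁ i) + γ₂ • W₂⟫ / ⟪Y, Y⟫)
        (⟪βmed • X + ∑ i, γmed i • W₁ i, βmed • X + ∑ i, γmed i • W₁ i⟫ / ⟪Y, Y⟫)
        ⟪Y, Y⟫
        ⟪X, ∑ i, γmed i • W₁ i⟫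
        ⟪∑ i, pi1 W₁ X i • W₁ i, ∑ i, pi1 W₁ X i • W₁ i⟫
        ⟪perpW1 W₁ X, perpW1 W₁ X⟫
        (βmed - βlong)
      = 0 :=
  bias_is_root_of_oster_cubic_general Y X W₂ W₁ hpdYX hexog βlong βmed γ₂ δ γ₁ γmed U Vres hlong hUX
    hUW1 hUW2 hmed hVX hVW1 hδ
end

section
/- Assume Var(X^{⊥W₁}) > 0, Var(π₁'W₁) > 0, Cov(X, γ_med'W₁) ≠ 0, Var(Y) > 0 and R²_long > R²_med. Define δ(B) = −f₀(B)/f₁(B, R²_long) for all B where f₁(B, R²_long) ≠ 0, with f₀, f₁ as above. Then lim_{B → +∞} δ(B) = 1 and lim_{B → −∞} δ(B) = 1. Moreover for all sufficiently large B > 0, sign(δ(B) − 1) = sign(Cov(X, γ_med'W₁)), and for all sufficiently large B > 0, sign(δ(−B) − 1) = −sign(Cov(X, γ_med'W₁)). -/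
/-!
Dividing by `B³` (equivalently, evaluating the reversed polynomials at `1/B → 0`), both `−f₀(B)`
and `f₁(B, R²)` tend to their common leading coefficient `Var(X^{⊥W₁})·Var(π₁'W₁) > 0` as
`|B| → ∞`, so `δ(B) → 1`. Moreover `−f₀ − f₁` is a quadratic with leading coefficient
`Var(X^{⊥W₁})·Cov(X, γ_med'W₁)`, so `(δ(B) − 1)·B = (−f₀ − f₁)/f₁ · B` tends to
`Cov(X, γ_med'W₁)/Var(π₁'W₁)`, whose sign is that of `Cov(X, γ_med'W₁)`; the sign of `δ(B) − 1`
is this sign times that of `B`.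
-/

open Filter Topology Bornology Polynomial IsOrderBornology

namespace Polynomial

variable {𝕜 : Type*} [NormedField 𝕜]

theorem eval_div_pow_eq_eval_reflect_inv {P : 𝕜[X]} {N : ℕ} (hN : P.natDegree ≤ N) {x : 𝕜}
    (hx : x ≠ 0) : P.eval x / x ^ N = (reflect N P).eval x⁻¹ := by
  let := invertibleOfNonzero hx
  rw [div_eq_iff (pow_ne_zero N hx), ← invOf_eq_inv, eval, eval, eval₂_reflect_mul_pow _ _ _ _ hN]

theorem tendsto_eval_div_pow_cobounded {P : 𝕜[X]} {N : ℕ} (hN : P.natDegree ≤ N) :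
    Tendsto (fun x => P.eval x / x ^ N) (cobounded 𝕜) (𝓝 (P.coeff N)) := by
  have h : Tendsto (fun x => (reflect N P).eval x⁻¹) (cobounded 𝕜) (𝓝 (P.coeff N)) := by
    simpa [Function.comp_def, ← coeff_zero_eq_eval_zero, coeff_reflect] using
      ((reflect N P).continuous.tendsto 0).comp tendsto_inv₀_cobounded
  refine h.congr' ?_
  filter_upwards [eventually_ne_cobounded 0] with x hx
  exact (eval_div_pow_eq_eval_reflect_inv hN hx).symm

end Polynomial

theorem tendsto_div_mul_pow_cobounded {𝕜 : Type*} [NormedField 𝕜] {f g : 𝕜 → 𝕜} {a b : 𝕜}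
    {m n : ℕ} (hmn : m ≤ n) (hf : Tendsto (fun x => f x / x ^ m) (cobounded 𝕜) (𝓝 a))
    (hg : Tendsto (fun x => g x / x ^ n) (cobounded 𝕜) (𝓝 b)) (hb : b ≠ 0) :
    Tendsto (fun x => f x / g x * x ^ (n - m)) (cobounded 𝕜) (𝓝 (a / b)) := by
  refine (hf.div hg hb).congr' ?_
  filter_upwards [eventually_ne_cobounded 0] with x hx
  obtain ⟨k, rfl⟩ := Nat.exists_eq_add_of_le hmn
  simp only [Pi.div_apply, Nat.add_sub_cancel_left, pow_add]
  field_simp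

namespace Real

theorem sign_mul_of_pos (r : ℝ) {c : ℝ} (hc : 0 < c) : sign (r * c) = sign r := by
  rcases lt_trichotomy r 0 with hr | rfl | hr
  · rw [sign_of_neg (mul_neg_of_neg_of_pos hr hc), sign_of_neg hr]
  · rw [zero_mul]
  · rw [sign_of_pos (mul_pos hr hc), sign_of_pos hr]

end Real

theorem Filter.Tendsto.eventually_sign_eq {α : Type*} {l : Filter α} {f : α → ℝ} {a : ℝ}
    (h : Tendsto f l (𝓝 a)) (ha : a ≠ 0) : ∀ᶠ x in l, Real.sign (f x) = Real.sign a := by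
  rcases ha.lt_or_gt with ha | ha
  · filter_upwards [h.eventually (eventually_lt_nhds ha)] with x hx
    rw [Real.sign_of_neg hx, Real.sign_of_neg ha]
  · filter_upwards [h.eventually (eventually_gt_nhds ha)] with x hx
    rw [Real.sign_of_pos hx, Real.sign_of_pos ha]

section OsterCubic

variable (vXp vPi cXg vGam vY R2l R2m : ℝ)

theorem tendsto_neg_f0_div_pow_three :
    Tendsto (fun B => -f0 vXp vGam cXg vPi B / B ^ 3) (cobounded ℝ) (𝓝 (vXp * vPi)) := by
  have h := tendsto_eval_div_pow_cobounded (N := 3)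
    (P := C (vXp * vPi) * X ^ 3 + C (2 * vXp * cXg) * X ^ 2 + C (vXp * vGam) * X)
    (by compute_degree)
  convert h using 2 with B
  · simp only [f0, eval_add, eval_mul, eval_C, eval_pow, eval_X]
    ring
  · simp only [coeff_add, coeff_C_mul, coeff_X_pow, coeff_X]
    norm_num

theorem tendsto_f1_div_pow_three :
    Tendsto (fun B => f1 R2l R2m vY cXg vPi vXp B / B ^ 3) (cobounded ℝ) (𝓝 (vXp * vPi)) := by
  have h := tendsto_eval_div_pow_cobounded (N := 3)
    (P := C (vXp * vPi) * X ^ 3 + C (vXp * cXg) * X ^ 2 + C ((R2l - R2m) * vY * vPi) * X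
      + C ((R2l - R2m) * vY * cXg))
    (by compute_degree)
  convert h using 2 with B
  · simp only [f1, eval_add, eval_mul, eval_C, eval_pow, eval_X]
    ring
  · simp only [coeff_add, coeff_C_mul, coeff_X_pow, coeff_X, coeff_C]
    norm_num

theorem tendsto_neg_f0_sub_f1_div_sq :
    Tendsto (fun B => (-f0 vXp vGam cXg vPi B - f1 R2l R2m vY cXg vPi vXp B) / B ^ 2)
      (cobounded ℝ) (𝓝 (vXp * cXg)) := by
  have h := tendsto_eval_div_pow_cobounded (N := 2)
    (P := C (vXp * cXg) * X ^ 2 + C (vXp * vGam - (R2l - R2m) * vY * vPi) * X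
      - C ((R2l - R2m) * vY * cXg))
    (by compute_degree)
  convert h using 2 with B
  · simp only [f0, f1, eval_add, eval_sub, eval_mul, eval_C, eval_pow, eval_X]
    ring
  · simp only [coeff_add, coeff_sub, coeff_C_mul, coeff_X_pow, coeff_X, coeff_C]
    norm_num

end OsterCubic

theorem delta_of_bias_asymptotics_general
    (vXp vPi cXg vGam vY R2l R2m : ℝ)
    (hvXp : 0 < vXp) (hvPi : 0 < vPi) (hcXg : cXg ≠ 0) :
    Filter.Tendsto (fun B : ℝ => -(f0 vXp vGam cXg vPi B) / f1 R2l R2m vY cXg vPi vXp B)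
      Filter.atTop (nhds 1)
    ∧ Filter.Tendsto (fun B : ℝ => -(f0 vXp vGam cXg vPi B) / f1 R2l R2m vY cXg vPi vXp B)
      Filter.atBot (nhds 1)
    ∧ (∀ᶠ B in Filter.atTop,
        Real.sign (-(f0 vXp vGam cXg vPi B) / f1 R2l R2m vY cXg vPi vXp B - 1)
          = Real.sign cXg)
    ∧ (∀ᶠ B in Filter.atTop,
        Real.sign (-(f0 vXp vGam cXg vPi (-B)) / f1 R2l R2m vY cXg vPi vXp (-B) - 1)
          = -Real.sign cXg) := by
  set δ := fun B : ℝ => -(f0 vXp vGam cXg vPi B) / f1 R2l R2m vY cXg vPi vXp B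
  have hlead : vXp * vPi ≠ 0 := (mul_pos hvXp hvPi).ne'
  have hden := tendsto_f1_div_pow_three vXp vPi cXg vY R2l R2m
  have hδ : Tendsto δ (cobounded ℝ) (𝓝 1) := by
    simpa [div_self hlead] using tendsto_div_mul_pow_cobounded le_rfl
      (tendsto_neg_f0_div_pow_three vXp vPi cXg vGam) hden hlead
  have hgap : Tendsto (fun B => (δ B - 1) * B) (cobounded ℝ) (𝓝 (cXg / vPi)) := by
    have h := tendsto_div_mul_pow_cobounded (by norm_num)
      (tendsto_neg_f0_sub_f1_div_sq vXp vPi cXg vGam vY R2l R2m) hden hlead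
    rw [mul_div_mul_left _ _ hvXp.ne'] at h
    refine h.congr' ?_
    filter_upwards [hden.eventually_ne hlead] with B hB
    have hf1 : f1 R2l R2m vY cXg vPi vXp B ≠ 0 := fun h0 => hB (by rw [h0, zero_div])
    simp [δ, div_sub_one hf1]
  have hsign : ∀ᶠ B in cobounded ℝ, Real.sign ((δ B - 1) * B) = Real.sign cXg := by
    rw [← Real.sign_mul_of_pos cXg (inv_pos.2 hvPi), ← div_eq_mul_inv]
    exact hgap.eventually_sign_eq (div_ne_zero hcXg hvPi.ne')
  refine ⟨hδ.mono_left atTop_le_cobounded, hδ.mono_left atBot_le_cobounded, ?_, ?_⟩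
  · filter_upwards [atTop_le_cobounded hsign, eventually_gt_atTop 0]
      with B hB hpos
    rwa [Real.sign_mul_of_pos _ hpos] at hB
  · filter_upwards [tendsto_neg_atTop_atBot.eventually (atBot_le_cobounded hsign),
      eventually_gt_atTop 0] with B hB hpos
    rwa [mul_neg, Real.sign_neg, Real.sign_mul_of_pos _ hpos, neg_eq_iff_eq_neg] at hB

/-- Asymptotics of `δ(B) = −f₀(B)/f₁(B, R²_long)`: it tends to `1` as
`B → ±∞`, and for large `B > 0` the sign of `δ(B) − 1` equals
`sign(Cov(X, γ_med'W₁))` while the sign of `δ(−B) − 1` is its negative. -/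
theorem delta_of_bias_asymptotics
    (vXp vPi cXg vGam vY R2l R2m : ℝ)
    (hvXp : 0 < vXp) (hvPi : 0 < vPi) (hcXg : cXg ≠ 0)
    (hvY : 0 < vY) (hR2 : R2m < R2l) :
    Filter.Tendsto (fun B : ℝ => -(f0 vXp vGam cXg vPi B) / f1 R2l R2m vY cXg vPi vXp B)
      Filter.atTop (nhds 1)
    ∧ Filter.Tendsto (fun B : ℝ => -(f0 vXp vGam cXg vPi B) / f1 R2l R2m vY cXg vPi vXp B)
      Filter.atBot (nhds 1)
    ∧ (∀ᶠ B in Filter.atTop,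
        Real.sign (-(f0 vXp vGam cXg vPi B) / f1 R2l R2m vY cXg vPi vXp B - 1)
          = Real.sign cXg)
    ∧ (∀ᶠ B in Filter.atTop,
        Real.sign (-(f0 vXp vGam cXg vPi (-B)) / f1 R2l R2m vY cXg vPi vXp (-B) - 1)
          = -Real.sign cXg) :=
  delta_of_bias_asymptotics_general vXp vPi cXg vGam vY R2l R2m hvXp hvPi hcXg
end

section
/- Under the assumptions of the previous statement (and with β_med ≠ 0), define the sign-change breakdown point δ_sign(R²_long) = inf { |δ| : δ ∈ ℝ and the cubic equation f₀(β_med − b) + δ·f₁(β_med − b, R²_long) = 0 has a solution b with sign(b) ≠ sign(β_med) or b·β_med ≤ 0 }. Then δ_sign(R²_long) ≤ 1. -/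
/-!
For `B = β_med - b` with `f₁(B) ≠ 0`, the cubic is solved by `δ = -f₀(B) / f₁(B)`. Both `-f₀` and
`f₁` are cubics in `B` with the same leading coefficient `vXp · vPi`, so this `δ` tends to `1` as
`|B| → ∞`. Taking `B = t · β_med` with `t → ∞` gives `b = (1 - t) β_med`, of sign opposite to
`β_med` once `t ≥ 1`, so `|δ|` can be made arbitrarily close to `1` on sign-changing solutions.
-/

open Filter Topology Bornology

lemma neg_f0_eq_cube_mul (vXp vGam cXg vPi : ℝ) {B : ℝ} (hB : B ≠ 0) :
    -f0 vXp vGam cXg vPi B = B ^ 3 * (vXp * (vGam * B⁻¹ ^ 2 + 2 * cXg * B⁻¹ + vPi)) := by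
  simp only [f0]
  field_simp

lemma f1_eq_cube_mul (R2l R2m vY cXg vPi vXp : ℝ) {B : ℝ} (hB : B ≠ 0) :
    f1 R2l R2m vY cXg vPi vXp B = B ^ 3 * ((R2l - R2m) * vY * cXg * B⁻¹ ^ 3
      + (R2l - R2m) * vY * vPi * B⁻¹ ^ 2 + vXp * cXg * B⁻¹ + vXp * vPi) := by
  simp only [f1]
  field_simp

theorem tendsto_neg_f0_div_f1_cobounded {vXp vPi : ℝ} (hvXp : vXp ≠ 0) (hvPi : vPi ≠ 0)
    (vGam cXg R2l R2m vY : ℝ) :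
    Tendsto (fun B => -f0 vXp vGam cXg vPi B / f1 R2l R2m vY cXg vPi vXp B)
      (cobounded ℝ) (𝓝 1) := by
  set P : ℝ → ℝ := fun u => vXp * (vGam * u ^ 2 + 2 * cXg * u + vPi)
  set Q : ℝ → ℝ := fun u => (R2l - R2m) * vY * cXg * u ^ 3
      + (R2l - R2m) * vY * vPi * u ^ 2 + vXp * cXg * u + vXp * vPi
  have hQ0 : Q 0 ≠ 0 := by simpa [Q] using mul_ne_zero hvXp hvPi
  have hPQ : Tendsto (fun u => P u / Q u) (𝓝 0) (𝓝 1) := by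
    have h := ((show Continuous P by fun_prop).continuousAt.div
      (show Continuous Q by fun_prop).continuousAt hQ0).tendsto
    rw [Pi.div_apply, show P 0 = Q 0 by simp [P, Q], div_self hQ0] at h
    exact h
  refine (hPQ.comp tendsto_inv₀_cobounded).congr' ?_
  filter_upwards [eventually_ne_cobounded 0] with B hB
  simp only [Function.comp_apply, P, Q]
  rw [neg_f0_eq_cube_mul _ _ _ _ hB, f1_eq_cube_mul _ _ _ _ _ _ hB,
    mul_div_mul_left _ _ (pow_ne_zero 3 hB)]

theorem sign_change_breakdown_le_one_general
    (vXp vPi cXg vGam vY R2l R2m βmed : ℝ)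
    (hvXp : 0 < vXp) (hvPi : 0 < vPi) (hβ : βmed ≠ 0) :
    sInf {x : ℝ | ∃ δ b : ℝ, x = |δ|
      ∧ f0 vXp vGam cXg vPi (βmed - b) + δ * f1 R2l R2m vY cXg vPi vXp (βmed - b) = 0
      ∧ (Real.sign b ≠ Real.sign βmed ∨ b * βmed ≤ 0)} ≤ 1 := by
  set δ : ℝ → ℝ := fun B => -f0 vXp vGam cXg vPi B / f1 R2l R2m vY cXg vPi vXp B
  have hδ : Tendsto (fun t => δ (t * βmed)) atTop (𝓝 1) :=
    (tendsto_neg_f0_div_f1_cobounded hvXp.ne' hvPi.ne' vGam cXg R2l R2m vY).comp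
      ((tendsto_mul_right_cobounded hβ).mono_left IsOrderBornology.atTop_le_cobounded)
  refine ge_of_tendsto (by simpa using hδ.abs) ?_
  filter_upwards [eventually_ge_atTop 1, hδ.eventually_ne one_ne_zero] with t ht hδt
  -- `δ ≠ 0` forces `f₁ ≠ 0`, since division by zero returns zero.
  have hf1 : f1 R2l R2m vY cXg vPi vXp (t * βmed) ≠ 0 := (div_ne_zero_iff.mp hδt).2
  refine csInf_le ⟨0, ?_⟩ ⟨δ (t * βmed), βmed - t * βmed, rfl, ?_, Or.inr ?_⟩
  · rintro _ ⟨δ, b, rfl, -⟩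
    exact abs_nonneg δ
  · rw [sub_sub_cancel, div_mul_cancel₀ _ hf1, add_neg_cancel]
  · nlinarith [sq_nonneg βmed]

/-- The sign-change breakdown point is at most `1`: the infimum of `|δ|` over
all `δ` for which Oster's cubic (at `R²_long`) has a solution `b` with sign
different from `β_med` (or `b·β_med ≤ 0`) is bounded above by `1`. -/
theorem sign_change_breakdown_le_one
    (vXp vPi cXg vGam vY R2l R2m βmed : ℝ)
    (hvXp : 0 < vXp) (hvPi : 0 < vPi) (hcXg : cXg ≠ 0)
    (hvY : 0 < vY) (hR2 : R2m < R2l) (hR2l : R2l ≤ 1) (hβ : βmed ≠ 0) :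
    sInf {x : ℝ | ∃ δ b : ℝ, x = |δ|
      ∧ f0 vXp vGam cXg vPi (βmed - b) + δ * f1 R2l R2m vY cXg vPi vXp (βmed - b) = 0
      ∧ (Real.sign b ≠ Real.sign βmed ∨ b * βmed ≤ 0)} ≤ 1 :=
  sign_change_breakdown_le_one_general vXp vPi cXg vGam vY R2l R2m βmed hvXp hvPi hβ
end

section
/- Let W₁ be a random vector with Var(W₁) positive definite, and let X, Y, W₂ satisfy Cov(W₁, W₂) = 0 with the long projection Y = β_long X + γ₁'W₁ + γ₂W₂ + U and medium projection Y = β_med X + γ_med'W₁ + V, and π₁ = Var(W₁)⁻¹Cov(W₁, X). Then: there exists C ∈ ℝ with γ₁ = C·π₁ if and only if there exists C_med ∈ ℝ with γ_med = C_med·π₁. -/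
open scoped RealInnerProductSpace

/-!
Pairing both projections of `Y` with `W₁ j` and using that `W₂`, `U` and `Vres` are orthogonal
to `W₁` gives the normal equations `Var(W₁) (γ_med − γ₁) = (β_long − β_med) Cov(W₁, X)`.
Since `Var(W₁)` is invertible, `γ_med = γ₁ + (β_long − β_med) π₁`, and adding a multiple of `π₁`
preserves proportionality to `π₁`.
-/

theorem gram_mulVec_apply {V : Type*} [NormedAddCommGroup V] [InnerProductSpace ℝ V]
    {ι : Type*} [Fintype ι] (f : ι → V) (c : ι → ℝ) (j : ι) :
    (gram f).mulVec c j = ⟪f j, ∑ i, c i • f i⟫ := by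
  simp only [Matrix.mulVec, dotProduct, gram, Matrix.of_apply, inner_sum, inner_smul_right,
    mul_comm]

section pi1

variable {V : Type*} [NormedAddCommGroup V] [InnerProductSpace ℝ V] {d : ℕ}

theorem pi1_smul (W₁ : Fin d → V) (a : ℝ) (X : V) : pi1 W₁ (a • X) = a • pi1 W₁ X := by
  simp only [pi1, inner_smul_right, ← Matrix.mulVec_smul]
  rfl

theorem eq_pi1_of_inner_sum_eq {W₁ : Fin d → V} (hpd : (gram W₁).PosDef) {X : V}
    {c : Fin d → ℝ} (h : ∀ j, ⟪W₁ j, ∑ i, c i • W₁ i⟫ = ⟪W₁ j, X⟫) : c = pi1 W₁ X := by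
  let := hpd.isUnit.invertible
  refine (Matrix.inv_mulVec_eq_vec ?_).symm
  funext j
  rw [gram_mulVec_apply, h]

theorem eq_add_smul_pi1_of_projections {W₁ : Fin d → V} (hpd : (gram W₁).PosDef)
    {Y X W₂ U Vres : V} {βlong βmed γ₂ : ℝ} {γ₁ γmed : Fin d → ℝ}
    (hexog : ∀ i, ⟪W₁ i, W₂⟫ = 0) (hUW1 : ∀ i, ⟪U, W₁ i⟫ = 0) (hVW1 : ∀ i, ⟪Vres, W₁ i⟫ = 0)
    (hlong : Y = βlong • X + (∑ i, γ₁ i • W₁ i) + γ₂ • W₂ + U)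
    (hmed : Y = βmed • X + (∑ i, γmed i • W₁ i) + Vres) :
    γmed = γ₁ + (βlong - βmed) • pi1 W₁ X := by
  have hdiff : ∑ i, (γmed - γ₁) i • W₁ i = (βlong - βmed) • X + γ₂ • W₂ + U - Vres := by
    simp only [Pi.sub_apply, sub_smul, Finset.sum_sub_distrib]
    linear_combination (norm := module) hlong - hmed
  have hnormal : ∀ j, ⟪W₁ j, ∑ i, (γmed - γ₁) i • W₁ i⟫ = ⟪W₁ j, (βlong - βmed) • X⟫ := by
    intro j
    rw [hdiff, inner_sub_right, inner_add_right, inner_add_right, inner_smul_right (y := W₂),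
      hexog, real_inner_comm U, hUW1, real_inner_comm Vres, hVW1]
    ring
  rw [← pi1_smul, ← eq_pi1_of_inner_sum_eq hpd hnormal]
  abel

end pi1

theorem exists_eq_smul_iff_of_eq_add_smul {R M : Type*} [Ring R] [AddCommGroup M] [Module R M]
    {u v p : M} {b : R} (h : v = u + b • p) :
    (∃ C : R, u = C • p) ↔ (∃ C : R, v = C • p) := by
  constructor
  · rintro ⟨C, rfl⟩
    exact ⟨C + b, by rw [h, add_smul]⟩
  · rintro ⟨C, hC⟩
    exact ⟨C - b, by rw [sub_smul, ← hC, h, add_sub_cancel_right]⟩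

theorem proportional_iff_proportional_med_general
    {V : Type*} [NormedAddCommGroup V] [InnerProductSpace ℝ V] {d : ℕ}
    (Y X W₂ : V) (W₁ : Fin d → V)
    (hpdW1 : (gram W₁).PosDef)
    (hexog : ∀ i, ⟪W₁ i, W₂⟫ = 0)
    (βlong βmed γ₂ : ℝ) (γ₁ γmed : Fin d → ℝ) (U Vres : V)
    (hlong : Y = βlong • X + (∑ i, γ₁ i • W₁ i) + γ₂ • W₂ + U)
    (hUW1 : ∀ i, ⟪U, W₁ i⟫ = 0)
    (hmed : Y = βmed • X + (∑ i, γmed i • W₁ i) + Vres)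
    (hVW1 : ∀ i, ⟪Vres, W₁ i⟫ = 0) :
    (∃ C : ℝ, γ₁ = C • pi1 W₁ X) ↔ (∃ C : ℝ, γmed = C • pi1 W₁ X) :=
  exists_eq_smul_iff_of_eq_add_smul
    (eq_add_smul_pi1_of_projections hpdW1 hexog hUW1 hVW1 hlong hmed)

/-- Testability of the proportional-coefficients assumption: under exogenous
controls, `γ₁` is proportional to `π₁` if and only if `γ_med` is proportional
to `π₁`. -/
theorem proportional_iff_proportional_med
    {V : Type*} [NormedAddCommGroup V] [InnerProductSpace ℝ V] {d : ℕ}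
    (Y X W₂ : V) (W₁ : Fin d → V)
    (hpdW1 : (gram W₁).PosDef)
    (hexog : ∀ i, ⟪W₁ i, W₂⟫ = 0)
    (βlong βmed γ₂ : ℝ) (γ₁ γmed : Fin d → ℝ) (U Vres : V)
    (hlong : Y = βlong • X + (∑ i, γ₁ i • W₁ i) + γ₂ • W₂ + U)
    (hUX : ⟪U, X⟫ = 0) (hUW1 : ∀ i, ⟪U, W₁ i⟫ = 0) (hUW2 : ⟪U, W₂⟫ = 0)
    (hmed : Y = βmed • X + (∑ i, γmed i • W₁ i) + Vres)
    (hVX : ⟪Vres, X⟫ = 0) (hVW1 : ∀ i, ⟪Vres, W₁ i⟫ = 0) :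
    (∃ C : ℝ, γ₁ = C • pi1 W₁ X) ↔ (∃ C : ℝ, γmed = C • pi1 W₁ X) :=
  proportional_iff_proportional_med_general Y X W₂ W₁ hpdW1 hexog βlong βmed γ₂ γ₁ γmed U Vres hlong
    hUW1 hmed hVW1
end
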